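/- arXiv:2111.04055 — 2 statements merged into one kernel-verified Lean document; each statement's English description precedes it below -/
import Mathlib

section
/- Let Ψ¹, Ψ² be a pair of orthogonal partitioned incomplete quantum Latin squares of type hⁿ (holes V₁,...,V_n on the diagonal, each of dimension h, partitioning ℂ^{hn}), and let Φ¹, Φ² be a pair of orthogonal quantum Latin squares of dimension m. Then the arrays Ψ with entries Ψ¹_{i,j} ⊗ Φ¹_{l,k} and Φ with entries Ψ²_{i,j} ⊗ Φ²_{l,k} (indexed by ((i,l),(j,k)) and defined whenever the (i,j) cell is nonempty) form a pair of orthogonal partitioned incomplete quantum Latin squares of type (hm)ⁿ, with holes V_s ⊗ ℂ^m. -/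
noncomputable section

/-- The inner product on a complex inner product space, as a function into `ℂ`. -/
def ip {E : Type*} [NormedAddCommGroup E] [InnerProductSpace ℂ E] (x y : E) : ℂ :=
  inner ℂ x y

/-- Concrete tensor product `ℂ^a ⊗ ℂ^b ≃ ℂ^(a × b)` of two vectors. -/
def tens {a b : Type*} [Fintype a] [Fintype b] (u : EuclideanSpace ℂ a)
    (v : EuclideanSpace ℂ b) : EuclideanSpace ℂ (a × b) :=
  WithLp.toLp 2 (fun p => u p.1 * v p.2)

/-- Entrywise complex conjugation of a vector (in the standard basis). -/
def conjE {ι : Type*} [Fintype ι] (v : EuclideanSpace ℂ ι) : EuclideanSpace ℂ ι :=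
  WithLp.toLp 2 (fun k => star (v k))

/-- The hole subspace `V_s` of `ℂ^{[n] × α}`: the span of the standard basis vectors
indexed by `{s} × α`. A partitioned incomplete quantum Latin square of type `|α|ⁿ` has
rows and columns indexed by `Fin n × α`, the hole `V_s` corresponding to indices
with first component `s`. -/
def holeSub (n : ℕ) (α : Type*) [Fintype α] [DecidableEq α] (s : Fin n) :
    Submodule ℂ (EuclideanSpace ℂ (Fin n × α)) :=
  Submodule.span ℂ (Set.range fun x : α => EuclideanSpace.single ((s, x)) (1 : ℂ))

/-- A partitioned incomplete quantum Latin square (PIQLS) of type `|α|ⁿ` on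
`ℂ^{[n] × α}`, with holes `V_1, …, V_n` on the diagonal: the cells `(r, c)` with
`r.1 = c.1` are empty (unconstrained), and every row (resp. column) indexed in hole `s`
consists of vectors forming an orthonormal basis of the orthogonal complement `V_sᗮ`. -/
def IsPIQLS {n : ℕ} {α : Type*} [Fintype α] [DecidableEq α]
    (Ψ : (Fin n × α) → (Fin n × α) → EuclideanSpace ℂ (Fin n × α)) : Prop :=
  (∀ r : Fin n × α,
    Orthonormal ℂ (fun c : {c : Fin n × α // c.1 ≠ r.1} => Ψ r c) ∧
    (∀ c : Fin n × α, c.1 ≠ r.1 → Ψ r c ∈ (holeSub n α r.1)ᗮ) ∧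
    Submodule.span ℂ (Set.range fun c : {c : Fin n × α // c.1 ≠ r.1} => Ψ r c) =
      (holeSub n α r.1)ᗮ) ∧
  (∀ c : Fin n × α,
    Orthonormal ℂ (fun r : {r : Fin n × α // r.1 ≠ c.1} => Ψ r c) ∧
    (∀ r : Fin n × α, r.1 ≠ c.1 → Ψ r c ∈ (holeSub n α c.1)ᗮ) ∧
    Submodule.span ℂ (Set.range fun r : {r : Fin n × α // r.1 ≠ c.1} => Ψ (r : Fin n × α) c) =
      (holeSub n α c.1)ᗮ)

/-- The subspace `⊕_s V_s ⊗ V_s` of `ℂ^{[n]×α} ⊗ ℂ^{[n]×α}`. -/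
def bigHole (n : ℕ) (α : Type*) [Fintype α] [DecidableEq α] :
    Submodule ℂ (EuclideanSpace ℂ ((Fin n × α) × (Fin n × α))) :=
  Submodule.span ℂ (Set.range fun z : Fin n × α × α =>
    EuclideanSpace.single (((z.1, z.2.1), (z.1, z.2.2))) (1 : ℂ))

/-- Two PIQLSs with the same holes are orthogonal: the tensor products
`Ψ¹_{r,c} ⊗ Ψ²_{r,c}` over all filled cells form an orthonormal basis of
`(ℂ^D ⊗ ℂ^D) ⊖ ⊕_s (V_s ⊗ V_s)`. -/
def OrthPIQLS {n : ℕ} {α : Type*} [Fintype α] [DecidableEq α]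
    (Ψ₁ Ψ₂ : (Fin n × α) → (Fin n × α) → EuclideanSpace ℂ (Fin n × α)) : Prop :=
  Orthonormal ℂ (fun p : {q : (Fin n × α) × (Fin n × α) // q.1.1 ≠ q.2.1} =>
    tens (Ψ₁ p.1.1 p.1.2) (Ψ₂ p.1.1 p.1.2)) ∧
  (∀ p : {q : (Fin n × α) × (Fin n × α) // q.1.1 ≠ q.2.1},
    tens (Ψ₁ p.1.1 p.1.2) (Ψ₂ p.1.1 p.1.2) ∈ (bigHole n α)ᗮ) ∧
  Submodule.span ℂ (Set.range fun p : {q : (Fin n × α) × (Fin n × α) // q.1.1 ≠ q.2.1} =>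
    tens (Ψ₁ p.1.1 p.1.2) (Ψ₂ p.1.1 p.1.2)) = (bigHole n α)ᗮ

/-- A PIQLS is self-orthogonal (an HSOQLS) if the vectors `Ψ_{r,c} ⊗ conj (Ψ_{c,r})`
over all filled cells form an orthonormal basis of `(ℂ^D ⊗ ℂ^D) ⊖ ⊕_s (V_s ⊗ V_s)`. -/
def SelfOrthPIQLS {n : ℕ} {α : Type*} [Fintype α] [DecidableEq α]
    (Ψ : (Fin n × α) → (Fin n × α) → EuclideanSpace ℂ (Fin n × α)) : Prop :=
  Orthonormal ℂ (fun p : {q : (Fin n × α) × (Fin n × α) // q.1.1 ≠ q.2.1} =>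
    tens (Ψ p.1.1 p.1.2) (conjE (Ψ p.1.2 p.1.1))) ∧
  (∀ p : {q : (Fin n × α) × (Fin n × α) // q.1.1 ≠ q.2.1},
    tens (Ψ p.1.1 p.1.2) (conjE (Ψ p.1.2 p.1.1)) ∈ (bigHole n α)ᗮ) ∧
  Submodule.span ℂ (Set.range fun p : {q : (Fin n × α) × (Fin n × α) // q.1.1 ≠ q.2.1} =>
    tens (Ψ p.1.1 p.1.2) (conjE (Ψ p.1.2 p.1.1))) = (bigHole n α)ᗮ

/-- A quantum Latin square over index set `ι` with values in `E`. -/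
def IsQLSOn {ι : Type*} {E : Type*} [NormedAddCommGroup E] [InnerProductSpace ℂ E]
    (Φ : ι → ι → E) : Prop :=
  (∀ i, Orthonormal ℂ (Φ i)) ∧ (∀ j, Orthonormal ℂ (fun i => Φ i j))

/-- Orthogonality of two quantum Latin squares. -/
def OrthQLSOn {ι : Type*} [DecidableEq ι] {E : Type*} [NormedAddCommGroup E]
    [InnerProductSpace ℂ E] (Φ Ψ : ι → ι → E) : Prop :=
  ∀ i j i' j', ip (Φ i j) (Φ i' j') * ip (Ψ i j) (Ψ i' j') =
    if i = i' ∧ j = j' then 1 else 0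

/-! Each weighted cell is a tensor product `Ψ_{i,j} ⊗ Φ_{l,k}`, and inner products of tensor
products factor. So a weighted row (column) is, up to reindexing, the product of an orthonormal
row (column) of `Ψ` with an orthonormal row (column) of `Φ`, and the weighted orthogonality
family is the product of the orthonormal families `Ψ¹_{i,j} ⊗ Ψ²_{i,j}` and
`Φ¹_{l,k} ⊗ Φ²_{l,k}`. The new vectors vanish on the new holes because their `Ψ`-factors vanish
on the old ones, and they span the complements of the holes by counting dimensions. -/

open Module Submodule

theorem Orthonormal.prod_of_inner_map {ι κ E F G : Type*} [NormedAddCommGroup E]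
    [InnerProductSpace ℂ E] [NormedAddCommGroup F] [InnerProductSpace ℂ F]
    [NormedAddCommGroup G] [InnerProductSpace ℂ G] {B : E → F → G}
    (hB : ∀ u u' v v', inner ℂ (B u v) (B u' v') = inner ℂ u u' * inner ℂ v v')
    {f : ι → E} {g : κ → F} (hf : Orthonormal ℂ f) (hg : Orthonormal ℂ g) :
    Orthonormal ℂ fun p : ι × κ => B (f p.1) (g p.2) := by
  classical
  rw [orthonormal_iff_ite] at *
  intro p p'
  rw [hB, hf, hg]
  simp only [Prod.ext_iff]
  split_ifs <;> simp_all

theorem Orthonormal.span_range_eq_of_finrank {ι E : Type*} [Fintype ι] [NormedAddCommGroup E]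
    [InnerProductSpace ℂ E] {f : ι → E} (hf : Orthonormal ℂ f)
    {W : Submodule ℂ E} [FiniteDimensional ℂ W] (hmem : ∀ i, f i ∈ W)
    (hcard : finrank ℂ W = Fintype.card ι) :
    span ℂ (Set.range f) = W := by
  apply Submodule.eq_of_le_of_finrank_le
  · rw [span_le]; rintro _ ⟨i, rfl⟩; exact hmem i
  · rw [hcard, finrank_span_eq_card hf.linearIndependent]

section Tensor

variable {γ a b : Type*} [Fintype γ] [Fintype a] [Fintype b]

/-- `u ⊗ v` with coordinates read through `e`; `tens` is the case `e = Equiv.refl _`, a weighted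
cell the case `e = (Equiv.prodAssoc _ _ _).symm`. -/
def tensVia (e : γ ≃ a × b) (u : EuclideanSpace ℂ a) (v : EuclideanSpace ℂ b) :
    EuclideanSpace ℂ γ :=
  WithLp.toLp 2 fun q => u (e q).1 * v (e q).2

theorem inner_tensVia (e : γ ≃ a × b) (u u' : EuclideanSpace ℂ a) (v v' : EuclideanSpace ℂ b) :
    inner ℂ (tensVia e u v) (tensVia e u' v') = inner ℂ u u' * inner ℂ v v' := by
  simp only [tensVia, PiLp.inner_apply, RCLike.inner_apply, Finset.sum_mul_sum,
    ← Finset.sum_product']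
  refine Fintype.sum_equiv e _ _ fun q => ?_
  simp only [map_mul]
  ring

theorem inner_tens (u u' : EuclideanSpace ℂ a) (v v' : EuclideanSpace ℂ b) :
    inner ℂ (tens u v) (tens u' v') = inner ℂ u u' * inner ℂ v v' :=
  inner_tensVia (Equiv.refl _) u u' v v'

theorem tens_tensVia_tensVia (e : γ ≃ a × b) (u u' : EuclideanSpace ℂ a)
    (v v' : EuclideanSpace ℂ b) :
    tens (tensVia e u v) (tensVia e u' v') =
      tensVia ((e.prodCongr e).trans (Equiv.prodProdProdComm a b a b)) (tens u u') (tens v v') := by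
  ext q
  simp only [tens, tensVia, Equiv.trans_apply, Equiv.prodCongr_apply, Prod.map,
    Equiv.prodProdProdComm_apply]
  ring

theorem orthonormal_tensVia_subtype (e : γ ≃ a × b) {P : a → Prop}
    {f : {x // P x} → EuclideanSpace ℂ a} {g : b → EuclideanSpace ℂ b} (hf : Orthonormal ℂ f)
    (hg : Orthonormal ℂ g) :
    Orthonormal ℂ fun q : {q : γ // P (e q).1} => tensVia e (f ⟨(e q).1, q.2⟩) (g (e q).2) := by
  let r : {q : γ // P (e q).1} ≃ {x // P x} × b :=
    (e.subtypeEquiv fun _ => Iff.rfl).trans Equiv.prodSubtypeFstEquivSubtypeProd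
  exact (hf.prod_of_inner_map (inner_tensVia e) hg).comp r r.injective

end Tensor

theorem orthonormal_tens_of_orthQLSOn {ι : Type*} [Fintype ι] [DecidableEq ι]
    {Φ₁ Φ₂ : ι → ι → EuclideanSpace ℂ ι} (hΦ : OrthQLSOn Φ₁ Φ₂) :
    Orthonormal ℂ fun k : ι × ι => tens (Φ₁ k.1 k.2) (Φ₂ k.1 k.2) := by
  rw [orthonormal_iff_ite]
  intro k k'
  rw [inner_tens]
  simpa only [Prod.ext_iff, ip] using hΦ k.1 k.2 k'.1 k'.2

section SpanSingle

variable {ι κ : Type*} [Fintype ι] [DecidableEq ι]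

theorem mem_orthogonal_span_single_iff (g : κ → ι) (v : EuclideanSpace ℂ ι) :
    v ∈ (span ℂ (Set.range fun k => EuclideanSpace.single (g k) (1 : ℂ)))ᗮ ↔
      ∀ k, v (g k) = 0 := by
  rw [← span_singleton_le_iff_mem, ← isOrtho_iff_le, isOrtho_span]
  simp [EuclideanSpace.inner_single_right]

theorem finrank_orthogonal_span_single [Fintype κ] {g : κ → ι} (hg : Function.Injective g)
    {P : ι → Prop} [DecidablePred P] (hP : ∀ i, i ∈ Set.range g ↔ P i) :
    finrank ℂ (span ℂ (Set.range fun k => EuclideanSpace.single (g k) (1 : ℂ)))ᗮ =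
      Fintype.card {i // ¬ P i} := by
  have hspan := finrank_span_eq_card
    ((EuclideanSpace.orthonormal_single (𝕜 := ℂ)).comp g hg).linearIndependent
  have hsum := Submodule.finrank_add_finrank_orthogonal
    (span ℂ (Set.range fun k => EuclideanSpace.single (g k) (1 : ℂ)))
  have hcard : Fintype.card {i // P i} = Fintype.card κ :=
    (Fintype.card_congr ((Equiv.ofInjective g hg).trans (Equiv.subtypeEquivRight hP))).symm
  rw [Function.comp_def] at hspan
  rw [hspan, finrank_euclideanSpace] at hsum
  rw [Fintype.card_subtype_compl, hcard]
  omega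

end SpanSingle

section Holes

variable {n : ℕ} {α : Type*} [Fintype α] [DecidableEq α]

theorem mem_holeSub_orthogonal_iff (s : Fin n) (v : EuclideanSpace ℂ (Fin n × α)) :
    v ∈ (holeSub n α s)ᗮ ↔ ∀ x, v (s, x) = 0 :=
  mem_orthogonal_span_single_iff _ v

theorem finrank_holeSub_orthogonal (s : Fin n) :
    finrank ℂ (holeSub n α s)ᗮ = Fintype.card {c : Fin n × α // c.1 ≠ s} :=
  finrank_orthogonal_span_single (Prod.mk_right_injective s) fun c =>
    ⟨by rintro ⟨x, rfl⟩; rfl, fun h => ⟨c.2, Prod.ext h.symm rfl⟩⟩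

theorem mem_bigHole_orthogonal_iff (v : EuclideanSpace ℂ ((Fin n × α) × (Fin n × α))) :
    v ∈ (bigHole n α)ᗮ ↔ ∀ z : Fin n × α × α, v ((z.1, z.2.1), (z.1, z.2.2)) = 0 :=
  mem_orthogonal_span_single_iff _ v

theorem finrank_bigHole_orthogonal :
    finrank ℂ (bigHole n α)ᗮ = Fintype.card {q : (Fin n × α) × (Fin n × α) // q.1.1 ≠ q.2.1} := by
  refine finrank_orthogonal_span_single (fun z z' h => ?_) fun q =>
    ⟨by rintro ⟨z, rfl⟩; rfl, fun h => ⟨(q.1.1, q.1.2, q.2.2), Prod.ext rfl (Prod.ext h rfl)⟩⟩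
  simp only [Prod.ext_iff] at h
  exact Prod.ext h.1.1 (Prod.ext h.1.2 h.2.2)

end Holes

section Weighting

variable {n : ℕ} {α β γ : Type*} [Fintype α] [DecidableEq α] [Fintype β] [DecidableEq β]
  [Fintype γ] [DecidableEq γ]

/-- `IsPIQLS Ψ` unfolds to `IsHoleLine r.1 (Ψ r)` for every row `r` together with
`IsHoleLine c.1 (Ψ · c)` for every column `c`. -/
def IsHoleLine (s : Fin n) (f : Fin n × α → EuclideanSpace ℂ (Fin n × α)) : Prop :=
  Orthonormal ℂ (fun c : {c : Fin n × α // c.1 ≠ s} => f c) ∧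
    (∀ c : Fin n × α, c.1 ≠ s → f c ∈ (holeSub n α s)ᗮ) ∧
    span ℂ (Set.range fun c : {c : Fin n × α // c.1 ≠ s} => f c) = (holeSub n α s)ᗮ

theorem IsHoleLine.tensVia_prodAssoc {s : Fin n} {u : Fin n × β → EuclideanSpace ℂ (Fin n × β)}
    {w : γ → EuclideanSpace ℂ γ} (hu : IsHoleLine s u) (hw : Orthonormal ℂ w) :
    IsHoleLine s fun c : Fin n × (β × γ) =>
      tensVia (Equiv.prodAssoc (Fin n) β γ).symm (u (c.1, c.2.1)) (w c.2.2) := by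
  have hon := orthonormal_tensVia_subtype (Equiv.prodAssoc (Fin n) β γ).symm
    (P := fun c => c.1 ≠ s) hu.1 hw
  have hmem : ∀ c : Fin n × (β × γ), c.1 ≠ s →
      tensVia (Equiv.prodAssoc (Fin n) β γ).symm (u (c.1, c.2.1)) (w c.2.2) ∈
        (holeSub n (β × γ) s)ᗮ := by
    intro c hc
    rw [mem_holeSub_orthogonal_iff]
    intro x
    change u (c.1, c.2.1) (s, x.1) * w c.2.2 x.2 = 0
    rw [(mem_holeSub_orthogonal_iff s _).1 (hu.2.1 _ hc), zero_mul]
  exact ⟨hon, hmem, hon.span_range_eq_of_finrank (fun c => hmem c c.2)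
    (finrank_holeSub_orthogonal s)⟩

def weighting (Ψ : (Fin n × β) → (Fin n × β) → EuclideanSpace ℂ (Fin n × β))
    (Φ : γ → γ → EuclideanSpace ℂ γ) (r c : Fin n × (β × γ)) :
    EuclideanSpace ℂ (Fin n × (β × γ)) :=
  tensVia (Equiv.prodAssoc (Fin n) β γ).symm (Ψ (r.1, r.2.1) (c.1, c.2.1)) (Φ r.2.2 c.2.2)

theorem isPIQLS_weighting {Ψ : (Fin n × β) → (Fin n × β) → EuclideanSpace ℂ (Fin n × β)}
    {Φ : γ → γ → EuclideanSpace ℂ γ} (hΨ : IsPIQLS Ψ) (hΦ : IsQLSOn Φ) :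
    IsPIQLS (weighting Ψ Φ) :=
  ⟨fun r => IsHoleLine.tensVia_prodAssoc (u := Ψ (r.1, r.2.1)) (w := Φ r.2.2)
      (hΨ.1 (r.1, r.2.1)) (hΦ.1 r.2.2),
    fun c => IsHoleLine.tensVia_prodAssoc (u := fun r => Ψ r (c.1, c.2.1))
      (w := fun l => Φ l c.2.2) (hΨ.2 (c.1, c.2.1)) (hΦ.2 c.2.2)⟩

theorem orthPIQLS_weighting
    {Ψ₁ Ψ₂ : (Fin n × β) → (Fin n × β) → EuclideanSpace ℂ (Fin n × β)}
    {Φ₁ Φ₂ : γ → γ → EuclideanSpace ℂ γ} (hΨ : OrthPIQLS Ψ₁ Ψ₂) (hΦ : OrthQLSOn Φ₁ Φ₂) :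
    OrthPIQLS (weighting Ψ₁ Φ₁) (weighting Ψ₂ Φ₂) := by
  set e := (Equiv.prodAssoc (Fin n) β γ).symm
  -- `E` sends `((s, (x, l)), (t, (y, k)))` to `(((s, x), (t, y)), (l, k))`.
  set E := (e.prodCongr e).trans (Equiv.prodProdProdComm _ γ _ γ)
  have hcell : ∀ q : (Fin n × (β × γ)) × (Fin n × (β × γ)),
      tens (weighting Ψ₁ Φ₁ q.1 q.2) (weighting Ψ₂ Φ₂ q.1 q.2) =
        tensVia E (tens (Ψ₁ (E q).1.1 (E q).1.2) (Ψ₂ (E q).1.1 (E q).1.2))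
          (tens (Φ₁ (E q).2.1 (E q).2.2) (Φ₂ (E q).2.1 (E q).2.2)) :=
    fun q => tens_tensVia_tensVia e _ _ _ _
  simp only [OrthPIQLS, hcell]
  have hon := orthonormal_tensVia_subtype E (P := fun x => x.1.1 ≠ x.2.1) hΨ.1
    (orthonormal_tens_of_orthQLSOn hΦ)
  have hmem : ∀ p : {q : (Fin n × (β × γ)) × (Fin n × (β × γ)) // q.1.1 ≠ q.2.1},
      tensVia E (tens (Ψ₁ (E p).1.1 (E p).1.2) (Ψ₂ (E p).1.1 (E p).1.2))
          (tens (Φ₁ (E p).2.1 (E p).2.2) (Φ₂ (E p).2.1 (E p).2.2)) ∈ (bigHole n (β × γ))ᗮ := by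
    intro p
    rw [mem_bigHole_orthogonal_iff]
    intro z
    change tens (Ψ₁ (E p).1.1 (E p).1.2) (Ψ₂ (E p).1.1 (E p).1.2)
      ((z.1, z.2.1.1), (z.1, z.2.2.1)) * _ = 0
    rw [(mem_bigHole_orthogonal_iff _).1 (hΨ.2.1 ⟨(E p).1, p.2⟩) (z.1, z.2.1.1, z.2.2.1),
      zero_mul]
  exact ⟨hon, hmem, hon.span_range_eq_of_finrank hmem finrank_bigHole_orthogonal⟩

end Weighting

/-- Weighting construction: if `Ψ¹, Ψ²` is a pair of orthogonal PIQLSs of type `hⁿ`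
and `Φ¹, Φ²` is a pair of orthogonal quantum Latin squares of dimension `m`, then the
arrays with entries `Ψ¹_{i,j} ⊗ Φ¹_{l,k}` and `Ψ²_{i,j} ⊗ Φ²_{l,k}` form a pair of
orthogonal PIQLSs of type `(hm)ⁿ`, with holes `V_s ⊗ ℂ^m`. -/
theorem weighting_orth_piqls {n h m : ℕ}
    (Ψ₁ Ψ₂ : (Fin n × Fin h) → (Fin n × Fin h) → EuclideanSpace ℂ (Fin n × Fin h))
    (hΨ₁ : IsPIQLS Ψ₁) (hΨ₂ : IsPIQLS Ψ₂) (hΨo : OrthPIQLS Ψ₁ Ψ₂)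
    (Φ₁ Φ₂ : Fin m → Fin m → EuclideanSpace ℂ (Fin m))
    (hΦ₁ : IsQLSOn Φ₁) (hΦ₂ : IsQLSOn Φ₂) (hΦo : OrthQLSOn Φ₁ Φ₂) :
    IsPIQLS (n := n) (α := Fin h × Fin m)
      (fun r c => WithLp.toLp 2 fun p : Fin n × (Fin h × Fin m) =>
        Ψ₁ (r.1, r.2.1) (c.1, c.2.1) (p.1, p.2.1) * Φ₁ r.2.2 c.2.2 p.2.2) ∧
    IsPIQLS (n := n) (α := Fin h × Fin m)
      (fun r c => WithLp.toLp 2 fun p : Fin n × (Fin h × Fin m) =>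
        Ψ₂ (r.1, r.2.1) (c.1, c.2.1) (p.1, p.2.1) * Φ₂ r.2.2 c.2.2 p.2.2) ∧
    OrthPIQLS (n := n) (α := Fin h × Fin m)
      (fun r c => WithLp.toLp 2 fun p : Fin n × (Fin h × Fin m) =>
        Ψ₁ (r.1, r.2.1) (c.1, c.2.1) (p.1, p.2.1) * Φ₁ r.2.2 c.2.2 p.2.2)
      (fun r c => WithLp.toLp 2 fun p : Fin n × (Fin h × Fin m) =>
        Ψ₂ (r.1, r.2.1) (c.1, c.2.1) (p.1, p.2.1) * Φ₂ r.2.2 c.2.2 p.2.2) :=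
  ⟨isPIQLS_weighting hΨ₁ hΦ₁, isPIQLS_weighting hΨ₂ hΦ₂, orthPIQLS_weighting hΨo hΦo⟩
end
end

section
/- Let L¹,L²,L³ be three mutually orthogonal Latin cubes of order d₁ with property (B), and K¹,K²,K³ three mutually orthogonal Latin cubes of order d₂ with property (B). Then the cubes of dimension d₁d₂ with entries |Lˢ(i,j,k)⟩ ⊗ |Kˢ(f,g,h)⟩ (standard basis vectors in ℂ^{d₁} ⊗ ℂ^{d₂}), for s = 1,2,3, form a triple of orthogonal quantum Latin cubes of dimension d₁d₂. -/
noncomputable section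

/-- A quantum Latin cube over index set `ι` with values in the Hilbert space `E`:
every line (fixing two of the three indices) is an orthonormal basis. -/
def IsQLCOn {ι : Type*} {E : Type*} [NormedAddCommGroup E] [InnerProductSpace ℂ E]
    (Φ : ι → ι → ι → E) : Prop :=
  (∀ j k, Orthonormal ℂ fun i => Φ i j k) ∧
  (∀ i k, Orthonormal ℂ fun j => Φ i j k) ∧
  (∀ i j, Orthonormal ℂ (Φ i j))

/-- For each fixed value of one of the three indices, the corresponding planes of the
two cubes form a pair of orthogonal quantum Latin squares. -/
def PlanesOrth {ι : Type*} [DecidableEq ι] {E : Type*} [NormedAddCommGroup E]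
    [InnerProductSpace ℂ E] (Φ Ψ : ι → ι → ι → E) : Prop :=
  (∀ i, ∀ j k j' k', ip (Φ i j k) (Φ i j' k') * ip (Ψ i j k) (Ψ i j' k') =
    if j = j' ∧ k = k' then 1 else 0) ∧
  (∀ j, ∀ i k i' k', ip (Φ i j k) (Φ i' j k') * ip (Ψ i j k) (Ψ i' j k') =
    if i = i' ∧ k = k' then 1 else 0) ∧
  (∀ k, ∀ i j i' j', ip (Φ i j k) (Φ i' j' k) * ip (Ψ i j k) (Ψ i' j' k) =
    if i = i' ∧ j = j' then 1 else 0)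

/-- Three quantum Latin cubes are orthogonal: (1) the triple tensor products over all
cells form an orthonormal basis of `E ⊗ E ⊗ E`, expressed via
`⟨Φ,Φ'⟩⟨Ψ,Ψ'⟩⟨Υ,Υ'⟩ = δ_{ii'}δ_{jj'}δ_{kk'}`; and (2) every pair of corresponding
planes of any two of the cubes is a pair of orthogonal quantum Latin squares. -/
def TripleOrthQLC {ι : Type*} [DecidableEq ι] {E : Type*} [NormedAddCommGroup E]
    [InnerProductSpace ℂ E] (Φ Ψ Υ : ι → ι → ι → E) : Prop :=
  (∀ i j k i' j' k',
    ip (Φ i j k) (Φ i' j' k') * ip (Ψ i j k) (Ψ i' j' k') * ip (Υ i j k) (Υ i' j' k') =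
      if i = i' ∧ j = j' ∧ k = k' then 1 else 0) ∧
  PlanesOrth Φ Ψ ∧ PlanesOrth Φ Υ ∧ PlanesOrth Ψ Υ

/-- A (classical) Latin cube of order `d`: fixing any two of the three coordinates
gives a bijection in the remaining one. -/
def IsLatinCube {d : ℕ} (L : Fin d → Fin d → Fin d → Fin d) : Prop :=
  (∀ j k, Function.Bijective fun i => L i j k) ∧
  (∀ i k, Function.Bijective fun j => L i j k) ∧
  (∀ i j, Function.Bijective (L i j))

/-- Three Latin cubes are orthogonal: their superposition is a bijection of `[d]³`. -/
def TripleOrthLC {d : ℕ} (L L' L'' : Fin d → Fin d → Fin d → Fin d) : Prop :=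
  Function.Bijective fun p : Fin d × Fin d × Fin d =>
    (L p.1 p.2.1 p.2.2, L' p.1 p.2.1 p.2.2, L'' p.1 p.2.1 p.2.2)

/-- Property (B) for a pair of Latin cubes: every pair of corresponding planes
(obtained by fixing one coordinate) forms a pair of orthogonal Latin squares. -/
def PlanesOrthLC {d : ℕ} (L L' : Fin d → Fin d → Fin d → Fin d) : Prop :=
  (∀ i, Function.Bijective fun p : Fin d × Fin d => (L i p.1 p.2, L' i p.1 p.2)) ∧
  (∀ j, Function.Bijective fun p : Fin d × Fin d => (L p.1 j p.2, L' p.1 j p.2)) ∧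
  (∀ k, Function.Bijective fun p : Fin d × Fin d => (L p.1 p.2 k, L' p.1 p.2 k))

/-! Every cube here has standard basis vectors as entries, so each inner product is a
Kronecker delta of the underlying symbols and each orthogonality condition says that some map
built from the symbol cubes is injective. For the product cube with symbols
`(L(i₁,j₁,k₁), K(i₂,j₂,k₂))` each such map is, up to reshuffling coordinates, the product of
the corresponding maps for `L` and `K`, hence injective. -/

open Function

variable {ι κ α β : Type*}

def LinesInjective (C : ι → ι → ι → α) : Prop :=
  (∀ j k, Injective fun i => C i j k) ∧ (∀ i k, Injective fun j => C i j k) ∧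
    ∀ i j, Injective (C i j)

def PlanesInjective (C D : ι → ι → ι → α) : Prop :=
  (∀ i, Injective fun p : ι × ι => (C i p.1 p.2, D i p.1 p.2)) ∧
  (∀ j, Injective fun p : ι × ι => (C p.1 j p.2, D p.1 j p.2)) ∧
  (∀ k, Injective fun p : ι × ι => (C p.1 p.2 k, D p.1 p.2 k))

def CellsInjective (C D E : ι → ι → ι → α) : Prop :=
  Injective fun p : ι × ι × ι =>
    (C p.1 p.2.1 p.2.2, D p.1 p.2.1 p.2.2, E p.1 p.2.1 p.2.2)

lemma IsLatinCube.linesInjective {d : ℕ} {L : Fin d → Fin d → Fin d → Fin d}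
    (h : IsLatinCube L) : LinesInjective L :=
  ⟨fun j k => (h.1 j k).1, fun i k => (h.2.1 i k).1, fun i j => (h.2.2 i j).1⟩

lemma PlanesOrthLC.planesInjective {d : ℕ} {L L' : Fin d → Fin d → Fin d → Fin d}
    (h : PlanesOrthLC L L') : PlanesInjective L L' :=
  ⟨fun i => (h.1 i).1, fun j => (h.2.1 j).1, fun k => (h.2.2 k).1⟩

section Product

def cubeProd (C : ι → ι → ι → α) (D : κ → κ → κ → β) : ι × κ → ι × κ → ι × κ → α × β :=
  fun i j k => (C i.1 j.1 k.1, D i.2 j.2 k.2)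

variable {C C' C'' : ι → ι → ι → α} {D D' D'' : κ → κ → κ → β}

lemma LinesInjective.cubeProd (hC : LinesInjective C) (hD : LinesInjective D) :
    LinesInjective (cubeProd C D) :=
  ⟨fun j k => (hC.1 j.1 k.1).prodMap (hD.1 j.2 k.2),
    fun i k => (hC.2.1 i.1 k.1).prodMap (hD.2.1 i.2 k.2),
    fun i j => (hC.2.2 i.1 j.1).prodMap (hD.2.2 i.2 j.2)⟩

lemma Function.Injective.prodProdProdComm_comp_prodMap {α' γ γ' δ δ' β' : Type*}
    {f : α × α' → β × β'} {g : γ × γ' → δ × δ'} (hf : Injective f) (hg : Injective g) :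
    Injective (Equiv.prodProdProdComm β β' δ δ' ∘ Prod.map f g ∘
      Equiv.prodProdProdComm α γ α' γ') :=
  (Equiv.injective _).comp ((hf.prodMap hg).comp (Equiv.injective _))

lemma PlanesInjective.cubeProd (hC : PlanesInjective C C') (hD : PlanesInjective D D') :
    PlanesInjective (cubeProd C D) (cubeProd C' D') :=
  ⟨fun i => (hC.1 i.1).prodProdProdComm_comp_prodMap (hD.1 i.2),
    fun j => (hC.2.1 j.1).prodProdProdComm_comp_prodMap (hD.2.1 j.2),
    fun k => (hC.2.2 k.1).prodProdProdComm_comp_prodMap (hD.2.2 k.2)⟩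

lemma CellsInjective.cubeProd (hC : CellsInjective C C' C'') (hD : CellsInjective D D' D'') :
    CellsInjective (cubeProd C D) (cubeProd C' D') (cubeProd C'' D'') := by
  rintro ⟨⟨i₁, i₂⟩, ⟨j₁, j₂⟩, ⟨k₁, k₂⟩⟩ ⟨⟨i₁', i₂'⟩, ⟨j₁', j₂'⟩, ⟨k₁', k₂'⟩⟩ h
  simp only [_root_.cubeProd, Prod.mk.injEq] at h
  have h₁ : (i₁, j₁, k₁) = (i₁', j₁', k₁') := hC (by simp only [h])
  have h₂ : (i₂, j₂, k₂) = (i₂', j₂', k₂') := hD (by simp only [h])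
  simp_all

end Product

section BasisCube

variable [Fintype α] [DecidableEq α]

def basisCube (C : ι → ι → ι → α) : ι → ι → ι → EuclideanSpace ℂ α :=
  fun i j k => EuclideanSpace.single (C i j k) 1

variable {C D E : ι → ι → ι → α}

lemma ip_basisCube (C : ι → ι → ι → α) (i j k i' j' k' : ι) :
    ip (basisCube C i j k) (basisCube C i' j' k') = if C i j k = C i' j' k' then 1 else 0 :=
  orthonormal_iff_ite.mp EuclideanSpace.orthonormal_single _ _

lemma isQLCOn_basisCube (hC : LinesInjective C) : IsQLCOn (basisCube C) :=
  ⟨fun j k => EuclideanSpace.orthonormal_single.comp _ (hC.1 j k),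
    fun i k => EuclideanSpace.orthonormal_single.comp _ (hC.2.1 i k),
    fun i j => EuclideanSpace.orthonormal_single.comp _ (hC.2.2 i j)⟩

lemma planesOrth_basisCube [DecidableEq ι] (h : PlanesInjective C D) :
    PlanesOrth (basisCube C) (basisCube D) := by
  refine ⟨fun i j k j' k' => ?_, fun j i k i' k' => ?_, fun k i j i' j' => ?_⟩ <;>
    simp only [ip_basisCube, ite_zero_mul_ite_zero, mul_one] <;> refine if_congr ?_ rfl rfl
  · simpa only [Prod.mk_inj] using (h.1 i).eq_iff (a := (j, k)) (b := (j', k'))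
  · simpa only [Prod.mk_inj] using (h.2.1 j).eq_iff (a := (i, k)) (b := (i', k'))
  · simpa only [Prod.mk_inj] using (h.2.2 k).eq_iff (a := (i, j)) (b := (i', j'))

lemma tripleOrthQLC_basisCube [DecidableEq ι] (hCDE : CellsInjective C D E)
    (hCD : PlanesInjective C D) (hCE : PlanesInjective C E) (hDE : PlanesInjective D E) :
    TripleOrthQLC (basisCube C) (basisCube D) (basisCube E) := by
  refine ⟨fun i j k i' j' k' => ?_, planesOrth_basisCube hCD, planesOrth_basisCube hCE,
    planesOrth_basisCube hDE⟩
  simp only [ip_basisCube, ite_zero_mul_ite_zero, mul_one]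
  refine if_congr ?_ rfl rfl
  simpa only [Prod.mk_inj, and_assoc] using hCDE.eq_iff (a := (i, j, k)) (b := (i', j', k'))

end BasisCube

lemma tens_single_one [Fintype α] [Fintype β] [DecidableEq α] [DecidableEq β] (a : α) (b : β) :
    tens (EuclideanSpace.single a (1 : ℂ)) (EuclideanSpace.single b 1) =
      EuclideanSpace.single (a, b) 1 := by
  ext p
  simp only [tens, PiLp.single_apply, ite_zero_mul_ite_zero, mul_one, Prod.ext_iff]

/-- Direct product construction for quantum Latin cubes: from two triples of mutually
orthogonal Latin cubes of orders `d₁` and `d₂`, each with property (B), the cubes of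
dimension `d₁d₂` with entries `|Lˢ(i,j,k)⟩ ⊗ |Kˢ(f,g,h)⟩` form a triple of orthogonal
quantum Latin cubes of dimension `d₁d₂`. -/
theorem molc_product_quantum {d₁ d₂ : ℕ}
    (L₁ L₂ L₃ : Fin d₁ → Fin d₁ → Fin d₁ → Fin d₁)
    (K₁ K₂ K₃ : Fin d₂ → Fin d₂ → Fin d₂ → Fin d₂)
    (hL : IsLatinCube L₁ ∧ IsLatinCube L₂ ∧ IsLatinCube L₃)
    (hK : IsLatinCube K₁ ∧ IsLatinCube K₂ ∧ IsLatinCube K₃)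
    (hLo : TripleOrthLC L₁ L₂ L₃) (hKo : TripleOrthLC K₁ K₂ K₃)
    (hLB : PlanesOrthLC L₁ L₂ ∧ PlanesOrthLC L₁ L₃ ∧ PlanesOrthLC L₂ L₃)
    (hKB : PlanesOrthLC K₁ K₂ ∧ PlanesOrthLC K₁ K₃ ∧ PlanesOrthLC K₂ K₃) :
    (IsQLCOn fun i j k : Fin d₁ × Fin d₂ =>
      tens (EuclideanSpace.single (L₁ i.1 j.1 k.1) (1 : ℂ))
        (EuclideanSpace.single (K₁ i.2 j.2 k.2) (1 : ℂ))) ∧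
    (IsQLCOn fun i j k : Fin d₁ × Fin d₂ =>
      tens (EuclideanSpace.single (L₂ i.1 j.1 k.1) (1 : ℂ))
        (EuclideanSpace.single (K₂ i.2 j.2 k.2) (1 : ℂ))) ∧
    (IsQLCOn fun i j k : Fin d₁ × Fin d₂ =>
      tens (EuclideanSpace.single (L₃ i.1 j.1 k.1) (1 : ℂ))
        (EuclideanSpace.single (K₃ i.2 j.2 k.2) (1 : ℂ))) ∧
    TripleOrthQLC
      (fun i j k : Fin d₁ × Fin d₂ =>
        tens (EuclideanSpace.single (L₁ i.1 j.1 k.1) (1 : ℂ))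
          (EuclideanSpace.single (K₁ i.2 j.2 k.2) (1 : ℂ)))
      (fun i j k : Fin d₁ × Fin d₂ =>
        tens (EuclideanSpace.single (L₂ i.1 j.1 k.1) (1 : ℂ))
          (EuclideanSpace.single (K₂ i.2 j.2 k.2) (1 : ℂ)))
      (fun i j k : Fin d₁ × Fin d₂ =>
        tens (EuclideanSpace.single (L₃ i.1 j.1 k.1) (1 : ℂ))
          (EuclideanSpace.single (K₃ i.2 j.2 k.2) (1 : ℂ))) := by
  simp only [tens_single_one]
  -- each cube is now `basisCube (cubeProd Lˢ Kˢ)` up to unfolding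
  exact ⟨isQLCOn_basisCube (hL.1.linesInjective.cubeProd hK.1.linesInjective),
    isQLCOn_basisCube (hL.2.1.linesInjective.cubeProd hK.2.1.linesInjective),
    isQLCOn_basisCube (hL.2.2.linesInjective.cubeProd hK.2.2.linesInjective),
    tripleOrthQLC_basisCube (CellsInjective.cubeProd hLo.injective hKo.injective)
      (hLB.1.planesInjective.cubeProd hKB.1.planesInjective)
      (hLB.2.1.planesInjective.cubeProd hKB.2.1.planesInjective)
      (hLB.2.2.planesInjective.cubeProd hKB.2.2.planesInjective)⟩
end
end
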